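/- arXiv:2502.14712 — 6 statements merged into one kernel-verified Lean document; each statement's English description precedes it below -/
import Mathlib

section
/- Let φ(0) = 1/√(2π) and let σ_v, V, w be positive reals with p ∈ (0, 1/2). Define F(p, w) = (1 - 2p)·φ(0)·(V + w + 1 - 2p)/σ_v - p. Then for any p* ∈ (0, 1/2) with F(p*, w) = 0, the implicit derivative ∂p*/∂w = (1 - 2p*)·φ(0) / (2·φ(0)·(V + w + 2(1 - 2p*)) + σ_v) is strictly positive. -/
open Real

theorem stmt0 (σv V w : ℝ) (hσv : 0 < σv) (hV : 0 < V) (hw : 0 < w)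
    (φ0 : ℝ) (hφ0 : φ0 = 1 / Real.sqrt (2 * π))
    (F : ℝ → ℝ → ℝ)
    (hF : ∀ p w', F p w' = (1 - 2 * p) * φ0 * (V + w' + 1 - 2 * p) / σv - p)
    (p : ℝ) (hp : p ∈ Set.Ioo (0 : ℝ) (1 / 2)) (hroot : F p w = 0) :
    0 < (1 - 2 * p) * φ0 / (2 * φ0 * (V + w + 2 * (1 - 2 * p)) + σv) := by
  have hφ : 0 < φ0 := by
    rw [hφ0]
    positivity
  have h1 : 0 < 1 - 2 * p := by
    have := hp.2; linarith
  apply div_pos (by positivity)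
  have : 0 < V + w + 2 * (1 - 2 * p) := by linarith
  positivity
end

section
/- Fix V > 0, w > 0, σ_v > 0, and p_R ∈ ℝ. Define G(p_L) = ((p_R² + V + w - p_L²)·φ((p_L(1-p_L) - p_R(1-p_R))/σ_v)·(1 - 2p_L))/σ_v - 2p_L·Φ((p_L(1-p_L) - p_R(1-p_R))/σ_v), where φ and Φ are the standard normal pdf and cdf. Then G(0) > 0 and G(1/2) < 0, so by the intermediate value theorem G has a zero in (0, 1/2). -/
open Real

/-- standard normal pdf -/
noncomputable def stdPdf (x : ℝ) : ℝ := (Real.sqrt (2 * π))⁻¹ * Real.exp (-x ^ 2 / 2)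

/-- standard normal cdf -/
noncomputable def stdCdf (x : ℝ) : ℝ := ∫ t in Set.Iic x, stdPdf t

lemma stdPdf_pos (x : ℝ) : 0 < stdPdf x := by
  have h : 0 < Real.sqrt (2 * π) := Real.sqrt_pos.2 (by positivity)
  exact mul_pos (inv_pos.2 h) (Real.exp_pos _)

@[continuity, fun_prop]
lemma continuous_stdPdf : Continuous stdPdf := by
  unfold stdPdf; fun_prop

lemma integrable_stdPdf : MeasureTheory.Integrable stdPdf := by
  have h := (integrable_exp_neg_mul_sq (by norm_num : (0:ℝ) < 1/2)).const_mul
    (Real.sqrt (2 * π))⁻¹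
  convert h using 2 with x
  unfold stdPdf
  ring_nf

lemma stdCdf_pos (x : ℝ) : 0 < stdCdf x := by
  rw [stdCdf]
  rw [MeasureTheory.setIntegral_pos_iff_support_of_nonneg_ae
    (Filter.Eventually.of_forall fun t => (stdPdf_pos t).le)
    integrable_stdPdf.integrableOn]
  have : Function.support stdPdf ∩ Set.Iic x = Set.Iic x := by
    apply Set.inter_eq_self_of_subset_right
    intro t _; exact (stdPdf_pos t).ne'
  rw [this]
  simp [Real.volume_Iic]

@[continuity, fun_prop]
lemma continuous_stdCdf : Continuous stdCdf := by
  have key : stdCdf = fun x => stdCdf 0 + ∫ t in (0 : ℝ)..x, stdPdf t := by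
    funext x
    have h := intervalIntegral.integral_Iic_sub_Iic (f := stdPdf)
      (μ := MeasureTheory.volume) (a := (0:ℝ)) (b := x)
      integrable_stdPdf.integrableOn integrable_stdPdf.integrableOn
    simp only [stdCdf] at *
    linarith
  have hc : Continuous fun x => ∫ t in (0 : ℝ)..x, stdPdf t :=
    intervalIntegral.continuous_primitive
      (fun a b => continuous_stdPdf.intervalIntegrable a b) 0
  rw [key]
  exact continuous_const.add hc

theorem stmt2 (V w σv pR : ℝ) (hV : 0 < V) (hw : 0 < w) (hσv : 0 < σv)
    (hpR : 1 / 4 < pR ^ 2 + V + w)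
    (G : ℝ → ℝ)
    (hG : ∀ pL, G pL =
      (pR ^ 2 + V + w - pL ^ 2) *
          stdPdf ((pL * (1 - pL) - pR * (1 - pR)) / σv) * (1 - 2 * pL) / σv
        - 2 * pL * stdCdf ((pL * (1 - pL) - pR * (1 - pR)) / σv)) :
    0 < G 0 ∧ G (1 / 2) < 0 ∧ ∃ p ∈ Set.Ioo (0 : ℝ) (1 / 2), G p = 0 := by
  have hpos : (0:ℝ) < pR ^ 2 + V + w := lt_trans (by norm_num) hpR
  have h0 : 0 < G 0 := by
    rw [hG 0]
    have hp1 := stdPdf_pos ((0 * (1 - 0) - pR * (1 - pR)) / σv)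
    have h2 : 0 < (pR ^ 2 + V + w - 0 ^ 2) *
        stdPdf ((0 * (1 - 0) - pR * (1 - pR)) / σv) * (1 - 2 * 0) / σv := by
      apply div_pos _ hσv; nlinarith
    linarith [h2]
  have hhalf : G (1 / 2) < 0 := by
    rw [hG (1/2)]
    have hc1 := stdCdf_pos ((1/2 * (1 - 1/2) - pR * (1 - pR)) / σv)
    have : (1 - 2 * (1/2 : ℝ)) = 0 := by norm_num
    rw [this]
    simp
    linarith
  refine ⟨h0, hhalf, ?_⟩
  have hGc : Continuous G := by
    have : G = fun pL =>
      (pR ^ 2 + V + w - pL ^ 2) *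
          stdPdf ((pL * (1 - pL) - pR * (1 - pR)) / σv) * (1 - 2 * pL) / σv
        - 2 * pL * stdCdf ((pL * (1 - pL) - pR * (1 - pR)) / σv) := funext hG
    rw [this]
    fun_prop
  have := intermediate_value_Ioo' (by norm_num : (0:ℝ) ≤ 1/2)
    hGc.continuousOn (f := G)
  have h0mem : (0:ℝ) ∈ Set.Ioo (G (1/2)) (G 0) := ⟨hhalf, h0⟩
  obtain ⟨p, hp, hGp⟩ := this h0mem
  exact ⟨p, hp, hGp⟩
end

section
/- Let φ(0) = 1/√(2π), and let σ_v, σ_i, V, w ≥ 0 with σ_v² + 4σ_i²w² > 0 and V + w > 0. Define H(p) = -((2p - 1)·φ(0)·(V + w + 1 - 2p))/√(σ_v² + 4σ_i²w²) - p on [0, 1/2]. Then H(0) > 0, H(1/2) < 0, H is strictly decreasing on [0, 1/2], and hence H has a unique zero p* ∈ (0, 1/2). -/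
open Real

theorem stmt3 (σv σi V w : ℝ) (hσv : 0 ≤ σv) (hσi : 0 ≤ σi) (hV : 0 ≤ V) (hw : 0 ≤ w)
    (hn : 0 < σv ^ 2 + 4 * σi ^ 2 * w ^ 2) (hVw : 0 < V + w)
    (φ0 : ℝ) (hφ0 : φ0 = 1 / Real.sqrt (2 * π))
    (H : ℝ → ℝ)
    (hH : ∀ p, H p =
      -((2 * p - 1) * φ0 * (V + w + 1 - 2 * p)) / Real.sqrt (σv ^ 2 + 4 * σi ^ 2 * w ^ 2) - p) :
    0 < H 0 ∧ H (1 / 2) < 0 ∧ StrictAntiOn H (Set.Icc 0 (1 / 2)) ∧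
      ∃! p, p ∈ Set.Ioo (0 : ℝ) (1 / 2) ∧ H p = 0 := by
  set s := Real.sqrt (σv ^ 2 + 4 * σi ^ 2 * w ^ 2) with hsdef
  have hs : 0 < s := Real.sqrt_pos.mpr hn
  have hφ0pos : 0 < φ0 := by
    rw [hφ0]
    positivity
  set c : ℝ := φ0 / s with hcdef
  have hc : 0 < c := div_pos hφ0pos hs
  have hH' : ∀ p, H p = c * (1 - 2 * p) * (V + w + 1 - 2 * p) - p := by
    intro p
    rw [hH p, hcdef]
    field_simp
    ring
  have h0 : 0 < H 0 := by
    rw [hH' 0]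
    nlinarith [mul_pos hc hVw]
  have hhalf : H (1 / 2) < 0 := by
    rw [hH' (1 / 2)]; norm_num
  have hanti : StrictAntiOn H (Set.Icc 0 (1 / 2)) := by
    intro x hx y hy hxy
    rw [hH' x, hH' y]
    have hx0 : (0 : ℝ) ≤ x := hx.1
    have hy2 : y ≤ 1 / 2 := hy.2
    have h1 : x + y < 1 := by linarith
    nlinarith [mul_pos hc hVw, mul_pos (mul_pos hc hVw) (sub_pos.mpr hxy),
      mul_pos (mul_pos hc (sub_pos.mpr h1)) (sub_pos.mpr hxy),
      mul_pos hc (sub_pos.mpr hxy)]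
  refine ⟨h0, hhalf, hanti, ?_⟩
  have hcont : ContinuousOn H (Set.Icc 0 (1 / 2)) := by
    have : H = fun p => c * (1 - 2 * p) * (V + w + 1 - 2 * p) - p := funext hH'
    rw [this]
    fun_prop
  have hsub := intermediate_value_Ioo' (by norm_num : (0:ℝ) ≤ 1 / 2) hcont
  have h0mem : (0 : ℝ) ∈ Set.Ioo (H (1 / 2)) (H 0) := ⟨hhalf, h0⟩
  obtain ⟨p, hp, hHp⟩ := hsub h0mem
  refine ⟨p, ⟨hp, hHp⟩, ?_⟩
  rintro q ⟨hq, hHq⟩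
  by_contra hne
  have hpI : p ∈ Set.Icc (0:ℝ) (1/2) := Set.Ioo_subset_Icc_self hp
  have hqI : q ∈ Set.Icc (0:ℝ) (1/2) := Set.Ioo_subset_Icc_self hq
  rcases lt_or_gt_of_ne hne with h | h
  · have := hanti hqI hpI h
    rw [hHp, hHq] at this; exact lt_irrefl _ this
  · have := hanti hpI hqI h
    rw [hHp, hHq] at this; exact lt_irrefl _ this
end

section
/- Let φ(0) = 1/√(2π), σ_v, σ_i > 0, V > 0. For p ∈ (0, 1/2) define D(p, w) = ((1 - 2p)·φ(0)·(4σ_i²w(2p - V - 1) + σ_v²)) / ((σ_v² + 4σ_i²w²)·(2φ(0)(V + w + 2(1 - 2p)) + √(σ_v² + 4σ_i²w²))). Then D(p, 0) > 0, and D(p, w) < 0 if and only if w > σ_v² / (4σ_i²(1 + V - 2p)). -/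
open Real

theorem stmt4 (σv σi V : ℝ) (hσv : 0 < σv) (hσi : 0 < σi) (hV : 0 < V)
    (φ0 : ℝ) (hφ0 : φ0 = 1 / Real.sqrt (2 * π))
    (D : ℝ → ℝ → ℝ)
    (hD : ∀ p w, D p w =
      (1 - 2 * p) * φ0 * (4 * σi ^ 2 * w * (2 * p - V - 1) + σv ^ 2) /
        ((σv ^ 2 + 4 * σi ^ 2 * w ^ 2) *
          (2 * φ0 * (V + w + 2 * (1 - 2 * p)) + Real.sqrt (σv ^ 2 + 4 * σi ^ 2 * w ^ 2))))
    (p : ℝ) (hp : p ∈ Set.Ioo (0 : ℝ) (1 / 2)) :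
    0 < D p 0 ∧ ∀ w : ℝ, 0 ≤ w →
      (D p w < 0 ↔ σv ^ 2 / (4 * σi ^ 2 * (1 + V - 2 * p)) < w) := by
  obtain ⟨hp0, hp2⟩ := hp
  have hφ0pos : 0 < φ0 := by
    rw [hφ0]
    positivity
  have h1p : 0 < 1 - 2 * p := by linarith
  have hden : ∀ w : ℝ, 0 ≤ w → 0 < (σv ^ 2 + 4 * σi ^ 2 * w ^ 2) *
      (2 * φ0 * (V + w + 2 * (1 - 2 * p)) + Real.sqrt (σv ^ 2 + 4 * σi ^ 2 * w ^ 2)) := by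
    intro w hw
    have h1 : 0 < σv ^ 2 + 4 * σi ^ 2 * w ^ 2 := by positivity
    have h2 : 0 < Real.sqrt (σv ^ 2 + 4 * σi ^ 2 * w ^ 2) := Real.sqrt_pos.mpr h1
    have h3 : 0 < V + w + 2 * (1 - 2 * p) := by linarith
    have : 0 < 2 * φ0 * (V + w + 2 * (1 - 2 * p)) := by positivity
    nlinarith
  have hK : 0 < (1 - 2 * p) * φ0 := mul_pos h1p hφ0pos
  have h3 : 0 < 1 + V - 2 * p := by linarith
  have hc : 0 < 4 * σi ^ 2 * (1 + V - 2 * p) := by positivity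
  constructor
  · rw [hD]
    apply div_pos
    · have : (0:ℝ) < σv ^ 2 := by positivity
      nlinarith
    · simpa using hden 0 le_rfl
  · intro w hw
    rw [hD]
    have hdw := hden w hw
    rw [div_neg_iff]
    constructor
    · rintro (⟨h1, h2⟩ | ⟨h1, h2⟩)
      · linarith
      · have hA : 4 * σi ^ 2 * w * (2 * p - V - 1) + σv ^ 2 < 0 := by
          by_contra h'
          push_neg at h'
          nlinarith [mul_nonneg hK.le h']
        rw [div_lt_iff₀ hc]
        nlinarith [hA]
    · intro h
      rw [div_lt_iff₀ hc] at h
      have hA : 4 * σi ^ 2 * w * (2 * p - V - 1) + σv ^ 2 < 0 := by nlinarith [h]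
      exact Or.inr ⟨mul_neg_of_pos_of_neg hK hA, hdw⟩
end

section
/- Let f: [0, ∞) → ℝ be continuously differentiable with f(0) = c > 0 for some c, f'(0) > 0, and suppose there exists a continuous strictly increasing function T: ℝ → (0, ∞) of f's value such that for all w > 0: f'(w) < 0 if and only if w > T(f(w)), and f'(w) > 0 if w < T(f(w)). If additionally f'(w) < 0 for all sufficiently large w, then there exists w̃ > 0 such that f is strictly increasing on [0, w̃) and strictly decreasing on (w̃, ∞); i.e., f is single-peaked. -/
open Set

theorem stmt18 (f f' : ℝ → ℝ) (c : ℝ) (hc : 0 < c) (hf0 : f 0 = c)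
    (hderiv : ∀ w : ℝ, 0 ≤ w → HasDerivAt f (f' w) w)
    (hf'cont : ContinuousOn f' (Set.Ici 0))
    (hf'0 : 0 < f' 0)
    (T : ℝ → ℝ) (hTcont : Continuous T) (hTmono : StrictMono T) (hTpos : ∀ x, 0 < T x)
    (hsign₁ : ∀ w : ℝ, 0 < w → (f' w < 0 ↔ T (f w) < w))
    (hsign₂ : ∀ w : ℝ, 0 < w → w < T (f w) → 0 < f' w)
    (hlarge : ∃ M : ℝ, ∀ w : ℝ, M ≤ w → f' w < 0) :
    ∃ wtilde : ℝ, 0 < wtilde ∧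
      StrictMonoOn f (Set.Ico 0 wtilde) ∧ StrictAntiOn f (Set.Ioi wtilde) := by
  classical
  obtain ⟨M, hM⟩ := hlarge
  -- continuity of f on [0, ∞)
  have hfc : ContinuousOn f (Ici 0) := fun w hw =>
    (hderiv w hw).continuousAt.continuousWithinAt
  set g : ℝ → ℝ := fun w => w - T (f w) with hgdef
  have hgc : ContinuousOn g (Ici 0) :=
    continuousOn_id.sub (hTcont.comp_continuousOn hfc)
  have hg0 : g 0 < 0 := by
    simp only [hgdef, hf0]
    have := hTpos c; linarith
  -- the set where g ≤ 0
  set K : Set ℝ := Ici 0 ∩ g ⁻¹' (Iic 0) with hKdef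
  have hKclosed : IsClosed K :=
    hgc.preimage_isClosed_of_isClosed isClosed_Ici isClosed_Iic
  have hK0 : (0 : ℝ) ∈ K := ⟨Set.self_mem_Ici, le_of_lt hg0⟩
  have hKbdd : BddAbove K := by
    refine ⟨max M 1, fun w hw => ?_⟩
    by_contra hcon
    push_neg at hcon
    have hwM : M ≤ w := le_of_lt (lt_of_le_of_lt (le_max_left M 1) hcon)
    have hw1 : (0:ℝ) < w := lt_of_lt_of_le (lt_of_lt_of_le one_pos (le_max_right M 1)) (le_of_lt hcon)
    have := (hsign₁ w hw1).1 (hM w hwM)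
    have : 0 < g w := by simp only [hgdef]; linarith
    have := hw.2
    simp only [mem_preimage, mem_Iic] at this
    linarith
  set wt : ℝ := sSup K with hwt
  have hwtK : wt ∈ K := hKclosed.csSup_mem ⟨0, hK0⟩ hKbdd
  have hwtnonneg : 0 ≤ wt := hwtK.1
  have hwtg : g wt ≤ 0 := hwtK.2
  have hmem : ∀ w, w ∈ K → w ≤ wt := fun w hw => le_csSup hKbdd hw
  -- wt > 0
  have hwtpos : 0 < wt := by
    rcases lt_or_eq_of_le hwtnonneg with h | h
    · exact h
    · exfalso
      have hgt : ∀ w : ℝ, 0 < w → f' w < 0 := by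
        intro w hw
        have hnot : w ∉ K := fun hwK => absurd (hmem w hwK) (by rw [← h]; exact not_le.mpr hw)
        have : ¬ g w ≤ 0 := fun hg => hnot ⟨le_of_lt hw, hg⟩
        push_neg at this
        exact (hsign₁ w hw).2 (by simp only [hgdef] at this; linarith)
      have htend : Filter.Tendsto f' (nhdsWithin 0 (Ioi 0)) (nhds (f' 0)) :=
        (hf'cont 0 Set.self_mem_Ici).mono_left (nhdsWithin_mono 0 Ioi_subset_Ici_self)
      have hle : f' 0 ≤ 0 := by
        refine le_of_tendsto htend ?_
        filter_upwards [self_mem_nhdsWithin] with w hw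
        exact le_of_lt (hgt w hw)
      linarith
  -- Claim 1: g ≤ 0 on [0, wt]
  have hclaim1 : ∀ w, 0 ≤ w → w ≤ wt → g w ≤ 0 := by
    intro u hu0 huwt
    by_contra hgu
    push_neg at hgu
    have huwt' : u < wt := lt_of_le_of_ne huwt (fun h => by rw [h] at hgu; linarith)
    set A : Set ℝ := Icc u wt ∩ g ⁻¹' (Iic 0) with hAdef
    have hAclosed : IsClosed A := by
      refine (hgc.mono ?_).preimage_isClosed_of_isClosed isClosed_Icc isClosed_Iic
      exact fun x hx => le_trans hu0 hx.1
    have hAne : A.Nonempty := ⟨wt, ⟨le_of_lt huwt', le_refl wt⟩, hwtg⟩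
    have hAbdd : BddBelow A := ⟨u, fun x hx => hx.1.1⟩
    set a : ℝ := sInf A with ha
    have haA : a ∈ A := hAclosed.csInf_mem hAne hAbdd
    have hua : u ≤ a := haA.1.1
    have hua' : u < a := lt_of_le_of_ne hua (fun h => absurd haA.2 (by rw [← h]; exact not_le.mpr hgu))
    have hgpos : ∀ w, u ≤ w → w < a → 0 < g w := by
      intro w hw hwa
      by_contra hcon
      push_neg at hcon
      have : w ∈ A := ⟨⟨hw, le_trans (le_of_lt hwa) haA.1.2⟩, hcon⟩
      exact absurd (csInf_le hAbdd this) (not_le.mpr hwa)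
    have hu0' : 0 < u := by
      rcases lt_or_eq_of_le hu0 with h | h
      · exact h
      · exfalso; rw [← h] at hgu; linarith
    -- f strictly decreasing on [u, a]
    have hanti : StrictAntiOn f (Icc u a) := by
      apply strictAntiOn_of_deriv_neg (convex_Icc u a)
      · exact hfc.mono (fun x hx => le_trans (le_of_lt hu0') hx.1)
      · intro x hx
        rw [interior_Icc] at hx
        have hx0 : 0 < x := lt_trans hu0' hx.1
        have := hgpos x (le_of_lt hx.1) hx.2
        rw [(hderiv x (le_of_lt hx0)).deriv]
        exact (hsign₁ x hx0).2 (by simp only [hgdef] at this; linarith)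
    have hfa : f a < f u :=
      hanti ⟨le_refl u, le_of_lt hua'⟩ ⟨le_of_lt hua', le_refl a⟩ hua'
    have hTu : T (f u) < u := by simp only [hgdef] at hgu; linarith
    have : T (f a) < a := lt_trans (lt_trans (hTmono hfa) hTu) hua'
    have : 0 < g a := by simp only [hgdef]; linarith
    have := haA.2
    simp only [mem_preimage, mem_Iic] at this
    linarith
  -- monotonicity on [0, wt]
  have hmono : MonotoneOn f (Icc 0 wt) := by
    apply monotoneOn_of_deriv_nonneg (convex_Icc 0 wt) (hfc.mono Icc_subset_Ici_self)
    · intro x hx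
      rw [interior_Icc] at hx
      exact ((hderiv x (le_of_lt hx.1)).differentiableAt).differentiableWithinAt
    · intro x hx
      rw [interior_Icc] at hx
      rw [(hderiv x (le_of_lt hx.1)).deriv]
      by_contra hcon
      push_neg at hcon
      have := (hsign₁ x hx.1).1 hcon
      have := hclaim1 x (le_of_lt hx.1) (le_of_lt hx.2)
      simp only [hgdef] at this
      linarith
  -- strict monotonicity on [0, wt)
  have hstrict : StrictMonoOn f (Ico 0 wt) := by
    intro x hx y hy hxy
    have hxI : x ∈ Icc 0 wt := ⟨hx.1, le_of_lt hx.2⟩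
    have hyI : y ∈ Icc 0 wt := ⟨hy.1, le_of_lt hy.2⟩
    rcases lt_or_eq_of_le (hmono hxI hyI (le_of_lt hxy)) with h | h
    · exact h
    · exfalso
      -- f constant on [x, y]
      have hconst : ∀ w, w ∈ Icc x y → f w = f x := by
        intro w hw
        have hwI : w ∈ Icc 0 wt := ⟨le_trans hx.1 hw.1, le_trans hw.2 (le_of_lt hy.2)⟩
        have h1 := hmono hxI hwI hw.1
        have h2 := hmono hwI hyI hw.2
        rw [← h] at h2
        linarith
      have hzero : ∀ w, w ∈ Ioo x y → w = T (f x) := by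
        intro w hw
        have hw0 : 0 < w := lt_of_le_of_lt hx.1 hw.1
        have hwwt : w < wt := lt_trans hw.2 hy.2
        -- f' w = 0
        have hfw : f' w = 0 := by
          have hev : f =ᶠ[nhds w] (fun _ => f x) := by
            filter_upwards [Ioo_mem_nhds hw.1 hw.2] with z hz
            exact hconst z ⟨le_of_lt hz.1, le_of_lt hz.2⟩
          have h1 : HasDerivAt (fun _ : ℝ => f x) (f' w) w :=
            (hderiv w (le_of_lt hw0)).congr_of_eventuallyEq hev.symm
          have h2 : HasDerivAt (fun _ : ℝ => f x) 0 w := hasDerivAt_const w (f x)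
          exact h1.unique h2
        have hgle := hclaim1 w (le_of_lt hw0) (le_of_lt hwwt)
        have hgge : ¬ g w < 0 := by
          intro hcon
          have : w < T (f w) := by simp only [hgdef] at hcon; linarith
          have := hsign₂ w hw0 this
          linarith
        push_neg at hgge
        have hgw : g w = 0 := le_antisymm hgle hgge
        have : w = T (f w) := by simp only [hgdef] at hgw; linarith
        rw [this, hconst w ⟨le_of_lt hw.1, le_of_lt hw.2⟩]
      set w₁ : ℝ := x + (y - x) / 3 with hw₁
      set w₂ : ℝ := x + 2 * (y - x) / 3 with hw₂
      have h1 : w₁ ∈ Ioo x y := by constructor <;> (simp only [hw₁]; linarith)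
      have h2 : w₂ ∈ Ioo x y := by constructor <;> (simp only [hw₂]; linarith)
      have e1 := hzero w₁ h1
      have e2 := hzero w₂ h2
      rw [← e2] at e1
      simp only [hw₁, hw₂] at e1
      linarith
  -- strict antitonicity on (wt, ∞)
  have hanti : StrictAntiOn f (Ioi wt) := by
    apply strictAntiOn_of_deriv_neg (convex_Ioi wt)
    · exact hfc.mono (fun x hx => le_of_lt (lt_trans hwtpos hx))
    · intro x hx
      rw [interior_Ioi] at hx
      have hx0 : 0 < x := lt_trans hwtpos hx
      have hnotK : x ∉ K := fun hxK => absurd (hmem x hxK) (not_le.mpr hx)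
      have hgx : 0 < g x := by
        by_contra hcon
        push_neg at hcon
        exact hnotK ⟨le_of_lt hx0, hcon⟩
      rw [(hderiv x (le_of_lt hx0)).deriv]
      exact (hsign₁ x hx0).2 (by simp only [hgdef] at hgx; linarith)
  exact ⟨wt, hwtpos, hstrict, hanti⟩
end

section
/- Let σ_v > 0, V > 0, w ≥ 0, φ(0) = 1/√(2π), and let p*(w) ∈ (0, 1/2) be the unique root of H(p, w) = (1 - 2p)·φ(0)·(V + w + 1 - 2p)/√(σ_v² + 4σ_i²w²) - p for given σ_i ≥ 0. When σ_i = 0, the polarization Δ(w) = 1 - 2p*(w) is strictly decreasing in w. -/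
open Real

theorem stmt19 (σv V : ℝ) (hσv : 0 < σv) (hV : 0 < V)
    (φ0 : ℝ) (hφ0 : φ0 = 1 / Real.sqrt (2 * π))
    (σi : ℝ) (hσi : σi = 0)
    (H : ℝ → ℝ → ℝ)
    (hH : ∀ p w, H p w =
      (1 - 2 * p) * φ0 * (V + w + 1 - 2 * p) / Real.sqrt (σv ^ 2 + 4 * σi ^ 2 * w ^ 2) - p)
    (pstar : ℝ → ℝ)
    (hmem : ∀ w : ℝ, 0 ≤ w → pstar w ∈ Set.Ioo (0 : ℝ) (1 / 2))
    (hroot : ∀ w : ℝ, 0 ≤ w → H (pstar w) w = 0)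
    (huniq : ∀ w : ℝ, 0 ≤ w → ∀ q ∈ Set.Ioo (0 : ℝ) (1 / 2), H q w = 0 → q = pstar w) :
    StrictAntiOn (fun w => 1 - 2 * pstar w) (Set.Ici (0 : ℝ)) := by
  intro w1 hw1 w2 hw2 h12
  simp only
  have hφ0p : 0 < φ0 := by
    rw [hφ0]
    positivity
  have hs : ∀ w : ℝ, Real.sqrt (σv ^ 2 + 4 * σi ^ 2 * w ^ 2) = σv := by
    intro w
    subst hσi
    simp [Real.sqrt_sq hσv.le]
  have e1 := hroot w1 hw1
  have e2 := hroot w2 hw2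
  rw [hH, hs] at e1 e2
  obtain ⟨hp1a, hp1b⟩ := hmem w1 hw1
  obtain ⟨hp2a, hp2b⟩ := hmem w2 hw2
  set p1 := pstar w1 with hP1
  set p2 := pstar w2 with hP2
  have hσv' : σv ≠ 0 := ne_of_gt hσv
  have h1 : (1 - 2*p1) * φ0 * (V + w1 + 1 - 2*p1) = p1 * σv := by
    field_simp at e1; linarith
  have h2 : (1 - 2*p2) * φ0 * (V + w2 + 1 - 2*p2) = p2 * σv := by
    field_simp at e2; linarith
  have hA1 : 0 < 1 - 2*p1 := by linarith
  have hA2 : 0 < 1 - 2*p2 := by linarith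
  have hw2' : (0:ℝ) ≤ w2 := hw2
  have hC1 : 0 < V + w2 + 1 - 2*p1 := by linarith
  suffices h : p1 < p2 by linarith
  by_contra hcon
  push_neg at hcon
  have step1 : p1 * σv < (1 - 2*p1) * φ0 * (V + w2 + 1 - 2*p1) := by
    nlinarith [mul_pos (mul_pos hA1 hφ0p) (sub_pos.mpr h12)]
  have step2 : (1 - 2*p1) * φ0 * (V + w2 + 1 - 2*p1) ≤
      (1 - 2*p2) * φ0 * (V + w2 + 1 - 2*p2) := by
    nlinarith [mul_nonneg (mul_nonneg (by linarith : (0:ℝ) ≤ p1 - p2) hφ0p.le) hC1.le,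
      mul_nonneg (mul_nonneg hA2.le hφ0p.le) (by linarith : (0:ℝ) ≤ 2*p1 - 2*p2)]
  nlinarith [mul_le_mul_of_nonneg_right hcon hσv.le]
end
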